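/- arXiv:1707.01597 — 4 statements merged into one kernel-verified Lean document; each statement's English description precedes it below -/
import Mathlib

section
/- Let p, q ≥ 0 and, for 0 < |κ| ≤ κ₁, set z_κ = λ_κ^∞ − iκ² Im F(λ_κ^∞,κ). Then there exist C > 0 and κ₂ ∈ (0,κ₁] such that for all 0 < |κ| ≤ κ₂: ∫_{a₀}^{b₀} |λ − Re z_κ|^p / |λ − z_κ|^q dλ ≤ Cκ^{2(p−q+1)} if p−q+1 < 0; ≤ C·|log|κ|| if p−q+1 = 0; and ≤ C if p−q+1 > 0. -/
/-!
Write `z_κ = r - iε` with `r = λ_κ^∞ ∈ [a₀, b₀]` and `ε = κ² Im F(r, κ)`. Since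
`|λ - z_κ| ≥ max (|λ - r|, ε)`, the integrand is at most `max (|λ - r|, ε) ^ (p - q)`,
whose integral over `[a₀, b₀]` is at most
`2 (ε ^ (p - q + 1) + ∫_ε^{b₀ - a₀} t ^ (p - q) dt)`; this is `O(ε ^ (p - q + 1))`,
`O(|log ε|)` or `O(1)` according to the sign of `p - q + 1`. It remains to bound `ε` below by a
multiple of `κ²`: as `F` is bounded, the fixed-point equation forces `λ_κ^∞ → λ₀`, so continuity
of `F` at `(λ₀, 0)` gives `Im F(λ_κ^∞, κ) → Im F(λ₀, 0) > 0`.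
-/

open MeasureTheory Filter Set Topology

theorem abs_re_rpow_div_norm_rpow_le {p q ε : ℝ} (hp : 0 ≤ p) (hq : 0 ≤ q) (hε : 0 < ε)
    {w : ℂ} (hεw : ε ≤ |w.im|) :
    |w.re| ^ p / ‖w‖ ^ q ≤ (max |w.re| ε) ^ (p - q) := by
  have hmax_pos : 0 < max |w.re| ε := lt_max_of_lt_right hε
  have hmax_le : max |w.re| ε ≤ ‖w‖ :=
    max_le (Complex.abs_re_le_norm w) (hεw.trans (Complex.abs_im_le_norm w))
  rw [Real.rpow_sub hmax_pos]
  exact div_le_div₀ (by positivity) (Real.rpow_le_rpow (abs_nonneg _) (le_max_left _ _) hp)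
    (by positivity) (Real.rpow_le_rpow hmax_pos.le hmax_le hq)

theorem integral_comp_abs_sub_le {f : ℝ → ℝ} (hf : Continuous f) (hf₀ : ∀ t, 0 ≤ f t)
    {a b r : ℝ} (hr : r ∈ Icc a b) :
    ∫ x in a..b, f |x - r| ≤ 2 * ∫ t in (0 : ℝ)..(b - a), f t := by
  have hfa : Continuous fun t => f |t| := hf.comp continuous_abs
  set D := b - a
  have hD : 0 ≤ D := by linarith [hr.1, hr.2]
  calc ∫ x in a..b, f |x - r|
      ≤ ∫ x in (r - D)..(r + D), f |x - r| :=
        intervalIntegral.integral_mono_interval (by linarith [hr.2]) (by linarith)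
          (by linarith [hr.1]) (.of_forall fun _ => hf₀ _)
          ((hfa.comp (continuous_sub_right r)).intervalIntegrable _ _)
    _ = ∫ t in (-D)..D, f |t| := by
        rw [intervalIntegral.integral_comp_sub_right (fun t => f |t|)]
        ring_nf
    _ = (∫ t in (-D)..0, f |-t|) + ∫ t in (0 : ℝ)..D, f |t| := by
        simp_rw [abs_neg]
        exact (intervalIntegral.integral_add_adjacent_intervals
          (hfa.intervalIntegrable _ _) (hfa.intervalIntegrable _ _)).symm
    _ = 2 * ∫ t in (0 : ℝ)..D, f t := by
        rw [intervalIntegral.integral_comp_neg (fun t => f |t|), neg_neg, neg_zero, ← two_mul]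
        congr 1
        refine intervalIntegral.integral_congr fun t ht => ?_
        rw [uIcc_of_le hD] at ht
        rw [abs_of_nonneg ht.1]

theorem integral_max_rpow_eq {ε D : ℝ} (s : ℝ) (hε : 0 < ε) (hεD : ε ≤ D) :
    ∫ t in (0 : ℝ)..D, (max t ε) ^ s = ε ^ (s + 1) + ∫ t in ε..D, t ^ s := by
  have hc : Continuous fun t : ℝ => (max t ε) ^ s :=
    (continuous_id.max continuous_const).rpow_const fun t => .inl (lt_max_of_lt_right hε).ne'
  rw [← intervalIntegral.integral_add_adjacent_intervals (b := ε)
    (hc.intervalIntegrable _ _) (hc.intervalIntegrable _ _)]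
  congr 1
  · rw [intervalIntegral.integral_congr (g := fun _ => ε ^ s) fun t ht => by
      rw [uIcc_of_le hε.le] at ht
      simp only [max_eq_right ht.2]]
    rw [intervalIntegral.integral_const, smul_eq_mul, sub_zero, Real.rpow_add_one hε.ne', mul_comm]
  · refine intervalIntegral.integral_congr fun t ht => ?_
    rw [uIcc_of_le hεD] at ht
    simp only [max_eq_left ht.1]

theorem rpow_add_integral_rpow_le_of_neg {ε D s : ℝ} (hε : 0 < ε) (hεD : ε ≤ D)
    (hs : s + 1 < 0) :
    ε ^ (s + 1) + ∫ t in ε..D, t ^ s ≤ (1 + 1 / -(s + 1)) * ε ^ (s + 1) := by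
  rw [integral_rpow
    (.inr ⟨by linarith, by rw [uIcc_of_le hεD]; exact fun h => hε.not_ge h.1⟩)]
  have hD : 0 ≤ D ^ (s + 1) := Real.rpow_nonneg (hε.le.trans hεD) _
  have key : (D ^ (s + 1) - ε ^ (s + 1)) / (s + 1) ≤ ε ^ (s + 1) / -(s + 1) := by
    rw [div_le_iff_of_neg hs, div_neg, neg_mul, div_mul_cancel₀ _ hs.ne]
    linarith
  linarith
    [show (1 + 1 / -(s + 1)) * ε ^ (s + 1) = ε ^ (s + 1) + ε ^ (s + 1) / -(s + 1) by ring]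

theorem rpow_add_integral_rpow_eq_log {ε D : ℝ} (hε : 0 < ε) (hεD : ε ≤ D) :
    ε ^ ((-1 : ℝ) + 1) + ∫ t in ε..D, t ^ (-1 : ℝ) = 1 + Real.log D - Real.log ε := by
  simp_rw [neg_add_cancel, Real.rpow_zero, Real.rpow_neg_one]
  rw [integral_inv_of_pos hε (hε.trans_le hεD), Real.log_div (hε.trans_le hεD).ne' hε.ne']
  ring

theorem rpow_add_integral_rpow_le_of_pos {ε D s : ℝ} (hε : 0 < ε) (hεD : ε ≤ D)
    (hs : 0 < s + 1) :
    ε ^ (s + 1) + ∫ t in ε..D, t ^ s ≤ (1 + 1 / (s + 1)) * D ^ (s + 1) := by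
  rw [integral_rpow (.inl (by linarith))]
  have hle : ε ^ (s + 1) ≤ D ^ (s + 1) := Real.rpow_le_rpow hε.le hεD hs.le
  have hε' : 0 ≤ ε ^ (s + 1) := by positivity
  have key : (D ^ (s + 1) - ε ^ (s + 1)) / (s + 1) ≤ D ^ (s + 1) / (s + 1) :=
    div_le_div_of_nonneg_right (by linarith) hs.le
  linarith
    [show (1 + 1 / (s + 1)) * D ^ (s + 1) = D ^ (s + 1) + D ^ (s + 1) / (s + 1) by ring]

theorem integral_abs_sub_re_rpow_div_norm_rpow_le {a₀ b₀ p q ε : ℝ} (hp : 0 ≤ p)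
    (hq : 0 ≤ q) {z : ℂ} (hz : z.re ∈ Icc a₀ b₀) (hε : 0 < ε) (hεz : ε ≤ |z.im|)
    (hεD : ε ≤ b₀ - a₀) :
    ∫ l in a₀..b₀, |l - z.re| ^ p / ‖(l : ℂ) - z‖ ^ q
      ≤ 2 * (ε ^ (p - q + 1) + ∫ t in ε..(b₀ - a₀), t ^ (p - q)) := by
  have him : ∀ l : ℝ, ε ≤ |((l : ℂ) - z).im| := fun l => by simpa using hεz
  have hnorm : ∀ l : ℝ, 0 < ‖(l : ℂ) - z‖ := fun l =>
    hε.trans_le ((him l).trans (Complex.abs_im_le_norm _))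
  have hcont : Continuous fun l : ℝ => |l - z.re| ^ p / ‖(l : ℂ) - z‖ ^ q :=
    ((continuous_abs.comp (continuous_sub_right _)).rpow_const fun _ => .inr hp).div
      ((Complex.continuous_ofReal.sub continuous_const).norm.rpow_const
        fun l => .inl (hnorm l).ne')
      fun l => (Real.rpow_pos_of_pos (hnorm l) _).ne'
  have hmax : Continuous fun t : ℝ => (max t ε) ^ (p - q) :=
    (continuous_id.max continuous_const).rpow_const fun t => .inl (lt_max_of_lt_right hε).ne'
  calc ∫ l in a₀..b₀, |l - z.re| ^ p / ‖(l : ℂ) - z‖ ^ q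
      ≤ ∫ l in a₀..b₀, (max |l - z.re| ε) ^ (p - q) :=
        intervalIntegral.integral_mono_on (hz.1.trans hz.2) (hcont.intervalIntegrable _ _)
          ((hmax.comp (continuous_abs.comp (continuous_sub_right _))).intervalIntegrable _ _)
          fun l _ => by simpa using abs_re_rpow_div_norm_rpow_le hp hq hε (him l)
    _ ≤ 2 * ∫ t in (0 : ℝ)..(b₀ - a₀), (max t ε) ^ (p - q) :=
        integral_comp_abs_sub_le hmax (fun t => by positivity) hz
    _ = _ := by rw [integral_max_rpow_eq _ hε hεD]

theorem integral_le_of_eq_ofReal_sub_I_mul_sq {a₀ b₀ p q m x k y : ℝ} (hp : 0 ≤ p)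
    (hq : 0 ≤ q) (hm : 0 < m) (hx : x ∈ Icc a₀ b₀) (hk : k ≠ 0) (hy : m ≤ y)
    (hkD : m * k ^ 2 ≤ b₀ - a₀) {z : ℂ} (hz : z = x - Complex.I * (k : ℂ) ^ 2 * y) :
    ∫ l in a₀..b₀, |l - z.re| ^ p / ‖(l : ℂ) - z‖ ^ q
      ≤ 2 * ((m * k ^ 2) ^ (p - q + 1) + ∫ t in (m * k ^ 2)..(b₀ - a₀), t ^ (p - q)) := by
  rw [← Complex.ofReal_pow] at hz
  have hzre : z.re = x := by
    simp only [hz, Complex.sub_re, Complex.mul_re, Complex.I_re, Complex.I_im, Complex.ofReal_re,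
      Complex.ofReal_im]
    ring
  have hzim : |z.im| = k ^ 2 * y := by
    simp only [hz, Complex.sub_im, Complex.mul_im, Complex.I_re, Complex.I_im, Complex.ofReal_re,
      Complex.ofReal_im]
    rw [abs_of_nonpos (by nlinarith [sq_nonneg k])]
    ring
  refine integral_abs_sub_re_rpow_div_norm_rpow_le hp hq (hzre ▸ hx) (by positivity) ?_ hkD
  rw [hzim, mul_comm]
  exact mul_le_mul_of_nonneg_left hy (sq_nonneg k)

theorem mul_sq_rpow {m : ℝ} (hm : 0 ≤ m) (k x : ℝ) :
    (m * k ^ 2) ^ x = m ^ x * |k| ^ (2 * x) := by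
  rw [Real.mul_rpow hm (sq_nonneg k), ← sq_abs, ← Real.rpow_natCast,
    ← Real.rpow_mul (abs_nonneg k)]
  norm_num

theorem two_mul_rpow_add_integral_rpow_le_log {m D k : ℝ} (hm : 0 < m) (hk : k ≠ 0)
    (hkD : m * k ^ 2 ≤ D) (hk_log : Real.log |k| ≤ -1) :
    2 * ((m * k ^ 2) ^ ((-1 : ℝ) + 1) + ∫ t in (m * k ^ 2)..D, t ^ (-1 : ℝ))
      ≤ (|2 + 2 * Real.log D - 2 * Real.log m| + 4) * |Real.log (abs k)| := by
  have hε : 0 < m * k ^ 2 := by positivity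
  rw [rpow_add_integral_rpow_eq_log hε hkD, Real.log_mul hm.ne' (by positivity), ← sq_abs,
    Real.log_pow, abs_of_neg (by linarith : Real.log |k| < 0)]
  push_cast
  nlinarith [le_abs_self (2 + 2 * Real.log D - 2 * Real.log m),
    mul_nonneg (abs_nonneg (2 + 2 * Real.log D - 2 * Real.log m))
      (by linarith : 0 ≤ -Real.log |k| - 1)]

theorem exists_bounds_two_mul_rpow_add_integral_rpow {m D : ℝ} (hm : 0 < m) (hD : 0 < D)
    (s : ℝ) : ∃ C > 0, ∀ᶠ k in 𝓝[≠] (0 : ℝ), m * k ^ 2 ≤ D ∧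
      (s + 1 < 0 → 2 * ((m * k ^ 2) ^ (s + 1) + ∫ t in (m * k ^ 2)..D, t ^ s)
        ≤ C * |k| ^ (2 * (s + 1))) ∧
      (s + 1 = 0 → 2 * ((m * k ^ 2) ^ (s + 1) + ∫ t in (m * k ^ 2)..D, t ^ s)
        ≤ C * |Real.log (abs k)|) ∧
      (0 < s + 1 → 2 * ((m * k ^ 2) ^ (s + 1) + ∫ t in (m * k ^ 2)..D, t ^ s) ≤ C) := by
  have hsmall : ∀ᶠ k in 𝓝[≠] (0 : ℝ), m * k ^ 2 ≤ D := by
    have : Tendsto (fun k : ℝ => m * k ^ 2) (𝓝 0) (𝓝 0) := by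
      simpa using ((continuous_pow 2).tendsto (0 : ℝ)).const_mul m
    exact eventually_nhdsWithin_of_eventually_nhds (this.eventually (eventually_le_nhds hD))
  have hlog : ∀ᶠ k in 𝓝[≠] (0 : ℝ), Real.log |k| ≤ -1 := by
    simpa only [Real.log_abs] using
      Real.tendsto_log_nhdsNE_zero.eventually (eventually_le_atBot (-1))
  have hne : ∀ᶠ k in 𝓝[≠] (0 : ℝ), k ≠ 0 := self_mem_nhdsWithin
  rcases lt_trichotomy (s + 1) 0 with hs | hs | hs
  · have hc : 0 < 1 + 1 / -(s + 1) := add_pos one_pos (one_div_pos.2 (neg_pos.2 hs))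
    refine ⟨2 * (1 + 1 / -(s + 1)) * m ^ (s + 1), by positivity, ?_⟩
    filter_upwards [hsmall, hne] with k hkD hk
    refine ⟨hkD, fun _ => ?_, fun h => absurd h hs.ne, fun h => absurd h hs.not_gt⟩
    have hε : 0 < m * k ^ 2 := by positivity
    calc _ ≤ 2 * ((1 + 1 / -(s + 1)) * (m * k ^ 2) ^ (s + 1)) := by
          gcongr; exact rpow_add_integral_rpow_le_of_neg hε hkD hs
      _ = _ := by rw [mul_sq_rpow hm.le]; ring
  · refine ⟨|2 + 2 * Real.log D - 2 * Real.log m| + 4, by positivity, ?_⟩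
    filter_upwards [hsmall, hne, hlog] with k hkD hk hk_log
    refine ⟨hkD, fun h => absurd hs h.ne, fun _ => ?_, fun h => absurd hs h.ne'⟩
    rw [show s = -1 by linarith]
    exact two_mul_rpow_add_integral_rpow_le_log hm hk hkD hk_log
  · refine ⟨2 * ((1 + 1 / (s + 1)) * D ^ (s + 1)), by positivity, ?_⟩
    filter_upwards [hsmall, hne] with k hkD hk
    refine ⟨hkD, fun h => absurd hs h.not_gt, fun h => absurd h hs.ne', fun _ => ?_⟩
    gcongr
    exact rpow_add_integral_rpow_le_of_pos (by positivity) hkD hs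

theorem tendsto_of_eventuallyEq_sub_sq_mul {lam r g : ℝ → ℝ} {x₀ M : ℝ}
    (hlam : Tendsto lam (𝓝 0) (𝓝 x₀)) (hg : ∀ᶠ k in 𝓝[≠] 0, |g k| ≤ M)
    (hr : ∀ᶠ k in 𝓝[≠] 0, r k = lam k - k ^ 2 * g k) :
    Tendsto r (𝓝[≠] 0) (𝓝 x₀) := by
  have hsq : Tendsto (fun k : ℝ => k ^ 2) (𝓝[≠] 0) (𝓝 0) := by
    simpa using ((continuous_pow 2).tendsto (0 : ℝ)).mono_left nhdsWithin_le_nhds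
  have := (hlam.mono_left nhdsWithin_le_nhds).sub
    (hsq.zero_mul_isBoundedUnder_le (isBoundedUnder_of_eventually_le hg))
  rw [sub_zero] at this
  exact this.congr' (hr.mono fun _ hk => hk.symm)

theorem eventually_lt_im_of_continuousWithinAt {F : ℝ → ℝ → ℂ} {S : Set (ℝ × ℝ)}
    {x₀ c : ℝ} {r : ℝ → ℝ} {l : Filter ℝ}
    (hF : ContinuousWithinAt (fun p : ℝ × ℝ => F p.1 p.2) S (x₀, 0)) (hc : c < (F x₀ 0).im)
    (hr : Tendsto r l (𝓝 x₀)) (hl : l ≤ 𝓝 0) (hS : ∀ᶠ k in l, (r k, k) ∈ S) :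
    ∀ᶠ k in l, c < (F (r k) k).im := by
  have hrk : Tendsto (fun k => (r k, k)) l (𝓝[S] (x₀, 0)) :=
    tendsto_nhdsWithin_iff.2 ⟨hr.prodMk_nhds hl, hS⟩
  exact ((Complex.continuous_im.tendsto _).comp (hF.tendsto.comp hrk)).eventually
    (eventually_gt_nhds hc)

theorem eventually_nhdsNE_zero_of_forall_abs_le {P : ℝ → Prop} {κ : ℝ} (hκ : 0 < κ)
    (h : ∀ k, k ≠ 0 → |k| ≤ κ → P k) : ∀ᶠ k in 𝓝[≠] (0 : ℝ), P k :=
  eventually_nhdsWithin_iff.2 <| Metric.eventually_nhds_iff.2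
    ⟨κ, hκ, fun k hk hk0 => h k hk0 (Real.dist_0_eq_abs k ▸ hk).le⟩

theorem exists_forall_abs_le_of_eventually {P : ℝ → Prop}
    (h : ∀ᶠ k in 𝓝[≠] (0 : ℝ), P k) {κ₁ : ℝ} (hκ₁ : 0 < κ₁) :
    ∃ κ₂, 0 < κ₂ ∧ κ₂ ≤ κ₁ ∧ ∀ k, k ≠ 0 → |k| ≤ κ₂ → P k := by
  obtain ⟨δ, hδ, hP⟩ := Metric.eventually_nhds_iff.1 (eventually_nhdsWithin_iff.1 h)
  refine ⟨min κ₁ (δ / 2), by positivity, min_le_left _ _, fun k hk0 hk => hP ?_ hk0⟩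
  rw [Real.dist_0_eq_abs]
  linarith [min_le_right κ₁ (δ / 2)]

theorem stmt_5_general
    (a a₀ b₀ b l₀ κ₀ : ℝ)
    (ha : a < a₀) (hab : a₀ < b₀) (hb : b₀ < b)
    (hl₀ : l₀ ∈ Ioo a₀ b₀) (hκ₀ : 0 < κ₀)
    (lam : ℝ → ℝ) (F : ℝ → ℝ → ℂ)
    -- (H0)(a)
    (hH0a : Tendsto lam (𝓝 0) (𝓝 l₀))
    -- (H0)(b)
    (hH0b : ∃ M : ℝ, ∀ l ∈ Icc a b, ∀ k ∈ Icc (-κ₀) κ₀, ‖F l k‖ ≤ M)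
    (hH0c : ContinuousWithinAt (fun p : ℝ × ℝ => F p.1 p.2)
      (Icc a b ×ˢ Icc (-κ₀) κ₀) (l₀, 0))
    -- (H2): inf of Im F on [a₀,b₀] is positive
    (hH2 : ∀ k ∈ Icc (-κ₀) κ₀, ∃ c > 0, ∀ l ∈ Icc a₀ b₀, c ≤ (F l k).im)
    -- choice of δ₁ and κ₁
    (κ₁ : ℝ)
    (hκ₁ : 0 < κ₁) (hκ₁' : κ₁ ≤ κ₀)
    -- λ_κ^∞ : the unique solution in [a₀,b₀] of λ = λ_κ − κ² Re F(λ,κ)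
    (lamInf : ℝ → ℝ)
    (hfix : ∀ k : ℝ, k ≠ 0 → |k| ≤ κ₁ → lamInf k ∈ Icc a₀ b₀ ∧
      lamInf k = lam k - k ^ 2 * (F (lamInf k) k).re ∧
      (∀ l' ∈ Icc a₀ b₀, l' = lam k - k ^ 2 * (F l' k).re → l' = lamInf k))
    (p q : ℝ) (hp : 0 ≤ p) (hq : 0 ≤ q) :
    ∀ z : ℝ → ℂ,
      (∀ k : ℝ, z k = (lamInf k : ℂ) - Complex.I * (k : ℂ) ^ 2 * ((F (lamInf k) k).im : ℂ)) →
      ∃ C > 0, ∃ κ₂ : ℝ, 0 < κ₂ ∧ κ₂ ≤ κ₁ ∧ ∀ k : ℝ, k ≠ 0 → |k| ≤ κ₂ →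
        (p - q + 1 < 0 →
          (∫ l in a₀..b₀, |l - (z k).re| ^ p / ‖(l : ℂ) - z k‖ ^ q)
            ≤ C * |k| ^ (2 * (p - q + 1))) ∧
        (p - q + 1 = 0 →
          (∫ l in a₀..b₀, |l - (z k).re| ^ p / ‖(l : ℂ) - z k‖ ^ q)
            ≤ C * abs (Real.log (abs k))) ∧
        (0 < p - q + 1 →
          (∫ l in a₀..b₀, |l - (z k).re| ^ p / ‖(l : ℂ) - z k‖ ^ q) ≤ C) := by
  intro z hz
  obtain ⟨M, hM⟩ := hH0b
  obtain ⟨c, hc, hcF⟩ := hH2 0 ⟨by linarith, hκ₀.le⟩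
  obtain ⟨C, hC, hbounds⟩ :=
    exists_bounds_two_mul_rpow_add_integral_rpow (half_pos hc) (sub_pos.2 hab) (p - q)
  have hloc : ∀ᶠ k in 𝓝[≠] (0 : ℝ), (lamInf k, k) ∈ Icc a b ×ˢ Icc (-κ₀) κ₀ ∧
      lamInf k ∈ Icc a₀ b₀ ∧ lamInf k = lam k - k ^ 2 * (F (lamInf k) k).re :=
    eventually_nhdsNE_zero_of_forall_abs_le hκ₁ fun k hk0 hk => by
      obtain ⟨hmem, heq, -⟩ := hfix k hk0 hk
      exact ⟨⟨⟨ha.le.trans hmem.1, hmem.2.trans hb.le⟩, abs_le.1 (hk.trans hκ₁')⟩,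
        hmem, heq⟩
  have hlim : Tendsto lamInf (𝓝[≠] 0) (𝓝 l₀) :=
    tendsto_of_eventuallyEq_sub_sq_mul hH0a
      (hloc.mono fun k hk => (Complex.abs_re_le_norm _).trans (hM _ hk.1.1 _ hk.1.2))
      (hloc.mono fun k hk => hk.2.2)
  have him : ∀ᶠ k in 𝓝[≠] (0 : ℝ), c / 2 < (F (lamInf k) k).im :=
    eventually_lt_im_of_continuousWithinAt hH0c
      (by linarith [hcF l₀ (Ioo_subset_Icc_self hl₀)]) hlim nhdsWithin_le_nhds
      (hloc.mono fun k hk => hk.1)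
  obtain ⟨κ₂, hκ₂, hκ₂₁, hκ₂P⟩ :=
    exists_forall_abs_le_of_eventually (hbounds.and (hloc.and him)) hκ₁
  refine ⟨C, hC, κ₂, hκ₂, hκ₂₁, fun k hk0 hk => ?_⟩
  obtain ⟨⟨hkD, hneg, hzero, hpos⟩, ⟨-, hmem, -⟩, hIm⟩ := hκ₂P k hk0 hk
  have hI :=
    integral_le_of_eq_ofReal_sub_I_mul_sq hp hq (half_pos hc) hmem hk0 hIm.le hkD (hz k)
  exact ⟨fun h => hI.trans (hneg h), fun h => hI.trans (hzero h), fun h => hI.trans (hpos h)⟩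

/-- Lemma 2.6 ("cases"): integral estimates near the point z_κ. -/
theorem stmt_5
    (a a₀ b₀ b l₀ κ₀ α : ℝ)
    (ha : a < a₀) (hab : a₀ < b₀) (hb : b₀ < b)
    (hl₀ : l₀ ∈ Ioo a₀ b₀) (hκ₀ : 0 < κ₀) (hα : α ∈ Ioc (0:ℝ) 1)
    (lam : ℝ → ℝ) (F F' : ℝ → ℝ → ℂ)
    -- (H0)(a)
    (hH0a : Tendsto lam (𝓝 0) (𝓝 l₀))
    -- (H0)(b)
    (hH0b : ∃ M : ℝ, ∀ l ∈ Icc a b, ∀ k ∈ Icc (-κ₀) κ₀, ‖F l k‖ ≤ M)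
    (hH0c : ContinuousWithinAt (fun p : ℝ × ℝ => F p.1 p.2)
      (Icc a b ×ˢ Icc (-κ₀) κ₀) (l₀, 0))
    -- (H1): F(·,κ) is C¹ on [a,b] with derivative F'
    (hH1 : ∀ k ∈ Icc (-κ₀) κ₀, ∀ l ∈ Icc a b,
      HasDerivWithinAt (fun x => F x k) (F' l k) (Icc a b) l)
    (hH1cont : ∀ k ∈ Icc (-κ₀) κ₀, ContinuousOn (fun l => F' l k) (Icc a b))
    -- (H1)(a): F' bounded
    (hH1a : ∃ M' : ℝ, ∀ l ∈ Icc a b, ∀ k ∈ Icc (-κ₀) κ₀, ‖F' l k‖ ≤ M')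
    -- (H1)(b): F' is α-Hölder on [a₀,b₀] uniformly in κ
    (hH1b : ∃ L : ℝ, ∀ k ∈ Icc (-κ₀) κ₀, ∀ l₁ ∈ Icc a₀ b₀, ∀ l₂ ∈ Icc a₀ b₀,
      ‖F' l₁ k - F' l₂ k‖ ≤ L * |l₁ - l₂| ^ α)
    -- (H2): inf of Im F on [a₀,b₀] is positive
    (hH2 : ∀ k ∈ Icc (-κ₀) κ₀, ∃ c > 0, ∀ l ∈ Icc a₀ b₀, c ≤ (F l k).im)
    -- choice of δ₁ and κ₁
    (δ₁ κ₁ : ℝ)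
    (hδ₁ : 0 < δ₁) (hδ₁' : δ₁ < min (l₀ - a₀) (min (b₀ - l₀) 1))
    (hκ₁ : 0 < κ₁) (hκ₁' : κ₁ ≤ κ₀)
    (hmap : ∀ k : ℝ, |k| ≤ κ₁ → ∀ l ∈ Icc a₀ b₀,
      lam k - k ^ 2 * (F l k).re ∈ Icc (a₀ + δ₁) (b₀ - δ₁))
    (hcontr : ∀ l ∈ Icc a₀ b₀, ∀ k ∈ Icc (-κ₀) κ₀, κ₁ ^ 2 * ‖F' l k‖ ≤ 1 - δ₁)
    -- λ_κ^∞ : the unique solution in [a₀,b₀] of λ = λ_κ − κ² Re F(λ,κ)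
    (lamInf : ℝ → ℝ)
    (hfix : ∀ k : ℝ, k ≠ 0 → |k| ≤ κ₁ → lamInf k ∈ Icc a₀ b₀ ∧
      lamInf k = lam k - k ^ 2 * (F (lamInf k) k).re ∧
      (∀ l' ∈ Icc a₀ b₀, l' = lam k - k ^ 2 * (F l' k).re → l' = lamInf k))
    (p q : ℝ) (hp : 0 ≤ p) (hq : 0 ≤ q) :
    ∀ z : ℝ → ℂ,
      (∀ k : ℝ, z k = (lamInf k : ℂ) - Complex.I * (k : ℂ) ^ 2 * ((F (lamInf k) k).im : ℂ)) →
      ∃ C > 0, ∃ κ₂ : ℝ, 0 < κ₂ ∧ κ₂ ≤ κ₁ ∧ ∀ k : ℝ, k ≠ 0 → |k| ≤ κ₂ →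
        (p - q + 1 < 0 →
          (∫ l in a₀..b₀, |l - (z k).re| ^ p / ‖(l : ℂ) - z k‖ ^ q)
            ≤ C * |k| ^ (2 * (p - q + 1))) ∧
        (p - q + 1 = 0 →
          (∫ l in a₀..b₀, |l - (z k).re| ^ p / ‖(l : ℂ) - z k‖ ^ q)
            ≤ C * abs (Real.log (abs k))) ∧
        (0 < p - q + 1 →
          (∫ l in a₀..b₀, |l - (z k).re| ^ p / ‖(l : ℂ) - z k‖ ^ q) ≤ C) :=
  stmt_5_general a a₀ b₀ b l₀ κ₀ ha hab hb hl₀ hκ₀ lam F hH0a hH0b hH0c hH2 κ₁ hκ₁ hκ₁' lamInf hfix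
    p q hp hq
end

section
/- There exists C > 0 such that for all λ ∈ [a₀,b₀] and 0 < |κ| ≤ κ₁: |G(λ,κ) − G₁(λ,κ)| ≤ Cκ²·|Ĝ(λ,κ)|·sup_{[a₀,b₀]×[−κ₀,κ₀]}|F'|, and |G(λ,κ) − G₁(λ,κ)| ≤ Cκ²·|Ĝ(λ,κ)|²·|λ − λ_κ^∞|^{α+1}. -/
open MeasureTheory Filter Set Topology

/-!
Write `Ĝ = z⁻¹` with `z = λ∞ − λ − iκ² Im F(λ∞)`. By the fixed-point equation for `λ∞`,
`D = z + κ²(F(λ∞) − F(λ))` and `D₁ = z − κ²F'(λ∞)(λ − λ∞)`, and the contraction bound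
`κ²|F'| ≤ 1 − δ₁` makes both perturbations at most `(1 − δ₁)|λ − λ∞| ≤ (1 − δ₁)|z|`, so that
`|D|, |D₁| ≥ δ₁|z|`. Hence `|G − G₁| = κ²|R| / (|D| |D₁|) ≤ κ²|Ĝ|²|R| / δ₁²`, where `R` is the
first-order Taylor remainder of `F(·, κ)` at `λ∞`. It is at most `2 sup|F'| |λ − λ∞|`, and at most
`L |λ − λ∞|^(1+α)` by the Hölder continuity of `F'`; for the first bound, `|λ − λ∞| |Ĝ| ≤ 1`.
-/

theorem mul_norm_le_norm_add {E : Type*} [SeminormedAddCommGroup E] {δ : ℝ} {z w : E}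
    (hw : ‖w‖ ≤ (1 - δ) * ‖z‖) : δ * ‖z‖ ≤ ‖z + w‖ := by
  have htri := norm_sub_le (z + w) w
  rw [add_sub_cancel_right] at htri
  linarith

theorem norm_inv_add_sub_inv_add_le {𝕜 : Type*} [NormedField 𝕜] {δ : ℝ} (hδ : 0 < δ)
    {z w₁ w₂ : 𝕜} (h₁ : ‖w₁‖ ≤ (1 - δ) * ‖z‖) (h₂ : ‖w₂‖ ≤ (1 - δ) * ‖z‖) :
    ‖(z + w₁)⁻¹ - (z + w₂)⁻¹‖ ≤ ‖z⁻¹‖ ^ 2 * ‖w₂ - w₁‖ / δ ^ 2 := by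
  rcases eq_or_ne z 0 with rfl | hz
  · obtain rfl : w₁ = 0 := norm_le_zero_iff.mp (by simpa using h₁)
    obtain rfl : w₂ = 0 := norm_le_zero_iff.mp (by simpa using h₂)
    simp
  have hzδ : 0 < δ * ‖z‖ := by positivity
  have e₁ := mul_norm_le_norm_add h₁
  have e₂ := mul_norm_le_norm_add h₂
  have hne₁ : z + w₁ ≠ 0 := norm_pos_iff.mp (hzδ.trans_le e₁)
  have hne₂ : z + w₂ ≠ 0 := norm_pos_iff.mp (hzδ.trans_le e₂)
  rw [inv_sub_inv hne₁ hne₂, add_sub_add_left_eq_sub, norm_div, norm_mul, norm_inv]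
  calc ‖w₂ - w₁‖ / (‖z + w₁‖ * ‖z + w₂‖)
      ≤ ‖w₂ - w₁‖ / ((δ * ‖z‖) * (δ * ‖z‖)) := by gcongr
    _ = ‖z‖⁻¹ ^ 2 * ‖w₂ - w₁‖ / δ ^ 2 := by field_simp

theorem norm_sub_sub_smul_le_of_norm_deriv_le {E : Type*} [NormedAddCommGroup E]
    [NormedSpace ℝ E] {f f' : ℝ → E} {s : Set ℝ} (hs : Convex ℝ s)
    (hf : ∀ t ∈ s, HasDerivWithinAt f (f' t) s t) {C : ℝ} (hC : ∀ t ∈ s, ‖f' t‖ ≤ C) {x y : ℝ}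
    (hx : x ∈ s) (hy : y ∈ s) : ‖f y - f x - (y - x) • f' x‖ ≤ 2 * C * |y - x| :=
  calc ‖f y - f x - (y - x) • f' x‖ ≤ ‖f y - f x‖ + ‖(y - x) • f' x‖ := norm_sub_le _ _
    _ ≤ C * ‖y - x‖ + |y - x| * C := by
      rw [norm_smul, Real.norm_eq_abs]
      exact add_le_add (hs.norm_image_sub_le_of_norm_hasDerivWithin_le hf hC hx hy)
        (mul_le_mul_of_nonneg_left (hC x hx) (abs_nonneg _))
    _ = 2 * C * |y - x| := by rw [Real.norm_eq_abs]; ring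

theorem norm_sub_sub_smul_le_of_holder_deriv {E : Type*} [NormedAddCommGroup E]
    [NormedSpace ℝ E] {f f' : ℝ → E} {s : Set ℝ} (hs : Convex ℝ s)
    (hf : ∀ t ∈ s, HasDerivWithinAt f (f' t) s t) {L α : ℝ} (hα : 0 ≤ α)
    (hL : ∀ t ∈ s, ∀ t' ∈ s, ‖f' t - f' t'‖ ≤ L * |t - t'| ^ α) {x y : ℝ} (hx : x ∈ s)
    (hy : y ∈ s) : ‖f y - f x - (y - x) • f' x‖ ≤ L * |y - x| ^ (α + 1) := by
  rcases eq_or_ne x y with rfl | hxy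
  · simp [Real.zero_rpow (by positivity : α + 1 ≠ 0)]
  have hL0 : 0 ≤ L := by
    have hpos : 0 < |x - y| ^ α := Real.rpow_pos_of_pos (abs_sub_pos.mpr hxy) α
    exact nonneg_of_mul_nonneg_left ((norm_nonneg _).trans (hL x hx y hy)) hpos
  have hsub : uIcc x y ⊆ s := hs.ordConnected.uIcc_subset hx hy
  have hg : ∀ t ∈ uIcc x y,
      HasDerivWithinAt (fun t => f t - t • f' x) (f' t - f' x) (uIcc x y) t := fun t ht =>
    ((hf t (hsub ht)).mono hsub).sub ((hasDerivAt_id t).smul_const (f' x)).hasDerivWithinAt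
      |>.congr_deriv (by simp)
  have hbound : ∀ t ∈ uIcc x y, ‖f' t - f' x‖ ≤ L * |y - x| ^ α := fun t ht => by
    calc ‖f' t - f' x‖ ≤ L * |t - x| ^ α := hL t (hsub ht) x hx
      _ ≤ L * |y - x| ^ α := by gcongr L * ?_ ^ α; exact abs_sub_left_of_mem_uIcc ht
  have hmvt := (convex_uIcc x y).norm_image_sub_le_of_norm_hasDerivWithin_le hg hbound
    left_mem_uIcc right_mem_uIcc
  calc ‖f y - f x - (y - x) • f' x‖ = ‖f y - y • f' x - (f x - x • f' x)‖ := by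
        rw [sub_smul]; congr 1; abel
    _ ≤ L * |y - x| ^ α * |y - x| := hmvt
    _ = L * |y - x| ^ (α + 1) := by
        rw [Real.rpow_add_one' (abs_nonneg _) (by positivity), mul_assoc]

open Complex in
theorem norm_inv_sub_inv_linearization_le {f f' : ℝ → ℂ} {s : Set ℝ} (hs : Convex ℝ s)
    (hf : ∀ t ∈ s, HasDerivWithinAt f (f' t) s t) {δ ε μ x₀ x : ℝ} (hδ : 0 < δ) (hε : 0 ≤ ε)
    (hf' : ∀ t ∈ s, ε * ‖f' t‖ ≤ 1 - δ) (hx₀ : x₀ ∈ s) (hfix : x₀ = μ - ε * (f x₀).re)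
    (hx : x ∈ s) :
    ‖((μ : ℂ) - x - ε * f x)⁻¹ - ((μ : ℂ) - x - ε * f x₀ - ε * f' x₀ * (x - x₀))⁻¹‖ ≤
      ‖((x₀ : ℂ) - x - I * ε * (f x₀).im)⁻¹‖ ^ 2 *
        (ε * ‖f x - f x₀ - (x - x₀) • f' x₀‖) / δ ^ 2 := by
  set z : ℂ := (x₀ : ℂ) - x - I * ε * (f x₀).im
  have h1δ : 0 ≤ 1 - δ := (mul_nonneg hε (norm_nonneg _)).trans (hf' x₀ hx₀)
  have hu : |x - x₀| ≤ ‖z‖ := by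
    calc |x - x₀| = |z.re| := by simp [z, abs_sub_comm]
      _ ≤ ‖z‖ := abs_re_le_norm z
  have hw₁ : ‖(ε : ℂ) * (f x₀ - f x)‖ ≤ (1 - δ) * ‖z‖ := by
    have hmvt := hs.norm_image_sub_le_of_norm_hasDerivWithin_le (f := fun t => (ε : ℂ) * f t)
      (fun t ht => (hf t ht).const_mul (ε : ℂ))
      (fun t ht => by rw [norm_mul, norm_real, Real.norm_of_nonneg hε]; exact hf' t ht) hx hx₀
    rw [mul_sub]
    refine hmvt.trans ?_
    rw [Real.norm_eq_abs, abs_sub_comm]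
    gcongr
  have hw₂ : ‖-((ε : ℂ) * f' x₀ * (x - x₀))‖ ≤ (1 - δ) * ‖z‖ := by
    rw [norm_neg, norm_mul, norm_mul, norm_real, Real.norm_of_nonneg hε, ← ofReal_sub,
      norm_real, Real.norm_eq_abs]
    exact mul_le_mul (hf' x₀ hx₀) hu (abs_nonneg _) h1δ
  have hμ : (μ : ℂ) = x₀ + ε * (f x₀).re := by
    exact_mod_cast (by linarith : μ = x₀ + ε * (f x₀).re)
  have hD : (μ : ℂ) - x - ε * f x = z + ε * (f x₀ - f x) := by
    rw [hμ]; linear_combination (ε : ℂ) * re_add_im (f x₀)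
  have hD₁ : (μ : ℂ) - x - ε * f x₀ - ε * f' x₀ * (x - x₀) =
      z + -((ε : ℂ) * f' x₀ * (x - x₀)) := by
    rw [hμ]; linear_combination (ε : ℂ) * re_add_im (f x₀)
  have hw : -((ε : ℂ) * f' x₀ * (x - x₀)) - ε * (f x₀ - f x) =
      ε * (f x - f x₀ - (x - x₀) • f' x₀) := by
    rw [real_smul]; push_cast; ring
  rw [hD, hD₁]
  refine (norm_inv_add_sub_inv_add_le hδ hw₁ hw₂).trans_eq ?_
  rw [hw, norm_mul, norm_real, Real.norm_of_nonneg hε]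

open Complex in
theorem norm_inv_sub_inv_linearization_le_of_norm_deriv_le {f f' : ℝ → ℂ} {s : Set ℝ}
    (hs : Convex ℝ s) (hf : ∀ t ∈ s, HasDerivWithinAt f (f' t) s t) {δ ε μ x₀ x M : ℝ}
    (hδ : 0 < δ) (hε : 0 ≤ ε) (hf' : ∀ t ∈ s, ε * ‖f' t‖ ≤ 1 - δ) (hx₀ : x₀ ∈ s)
    (hfix : x₀ = μ - ε * (f x₀).re) (hx : x ∈ s) (hM : ∀ t ∈ s, ‖f' t‖ ≤ M) :
    ‖((μ : ℂ) - x - ε * f x)⁻¹ - ((μ : ℂ) - x - ε * f x₀ - ε * f' x₀ * (x - x₀))⁻¹‖ ≤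
      2 / δ ^ 2 * ε * ‖((x₀ : ℂ) - x - I * ε * (f x₀).im)⁻¹‖ * M := by
  set z : ℂ := (x₀ : ℂ) - x - I * ε * (f x₀).im
  have hM0 : 0 ≤ M := (norm_nonneg _).trans (hM x₀ hx₀)
  have hu : ‖z⁻¹‖ * |x - x₀| ≤ 1 := by
    rw [norm_inv]
    refine inv_mul_le_one_of_le₀ ((abs_re_le_norm z).trans_eq' ?_) (norm_nonneg _)
    simp [z, abs_sub_comm]
  calc _ ≤ ‖z⁻¹‖ ^ 2 * (ε * (2 * M * |x - x₀|)) / δ ^ 2 :=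
        (norm_inv_sub_inv_linearization_le hs hf hδ hε hf' hx₀ hfix hx).trans
          (by gcongr; exact norm_sub_sub_smul_le_of_norm_deriv_le hs hf hM hx₀ hx)
    _ = 2 / δ ^ 2 * ε * ‖z⁻¹‖ * M * (‖z⁻¹‖ * |x - x₀|) := by ring
    _ ≤ 2 / δ ^ 2 * ε * ‖z⁻¹‖ * M := by
        simpa using mul_le_mul_of_nonneg_left hu (by positivity : 0 ≤ 2 / δ ^ 2 * ε * ‖z⁻¹‖ * M)

open Complex in
theorem norm_inv_sub_inv_linearization_le_of_holder_deriv {f f' : ℝ → ℂ} {s : Set ℝ}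
    (hs : Convex ℝ s) (hf : ∀ t ∈ s, HasDerivWithinAt f (f' t) s t) {δ ε μ x₀ x L α : ℝ}
    (hδ : 0 < δ) (hε : 0 ≤ ε) (hf' : ∀ t ∈ s, ε * ‖f' t‖ ≤ 1 - δ) (hx₀ : x₀ ∈ s)
    (hfix : x₀ = μ - ε * (f x₀).re) (hx : x ∈ s) (hα : 0 ≤ α)
    (hL : ∀ t ∈ s, ∀ t' ∈ s, ‖f' t - f' t'‖ ≤ L * |t - t'| ^ α) :
    ‖((μ : ℂ) - x - ε * f x)⁻¹ - ((μ : ℂ) - x - ε * f x₀ - ε * f' x₀ * (x - x₀))⁻¹‖ ≤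
      L / δ ^ 2 * ε * ‖((x₀ : ℂ) - x - I * ε * (f x₀).im)⁻¹‖ ^ 2 * |x - x₀| ^ (α + 1) :=
  calc _ ≤ ‖((x₀ : ℂ) - x - I * ε * (f x₀).im)⁻¹‖ ^ 2 * (ε * (L * |x - x₀| ^ (α + 1))) / δ ^ 2 :=
        (norm_inv_sub_inv_linearization_le hs hf hδ hε hf' hx₀ hfix hx).trans
          (by gcongr; exact norm_sub_sub_smul_le_of_holder_deriv hs hf hα hL hx₀ hx)
    _ = _ := by ring

theorem stmt_6_general
    (a a₀ b₀ b κ₀ α : ℝ)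
    (ha : a < a₀) (hb : b₀ < b)
    (hα : α ∈ Ioc (0:ℝ) 1)
    (lam : ℝ → ℝ) (F F' : ℝ → ℝ → ℂ)
    -- (H1): F(·,κ) is C¹ on [a,b] with derivative F'
    (hH1 : ∀ k ∈ Icc (-κ₀) κ₀, ∀ l ∈ Icc a b,
      HasDerivWithinAt (fun x => F x k) (F' l k) (Icc a b) l)
    -- (H1)(b): F' is α-Hölder on [a₀,b₀] uniformly in κ
    (hH1b : ∃ L : ℝ, ∀ k ∈ Icc (-κ₀) κ₀, ∀ l₁ ∈ Icc a₀ b₀, ∀ l₂ ∈ Icc a₀ b₀,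
      ‖F' l₁ k - F' l₂ k‖ ≤ L * |l₁ - l₂| ^ α)
    -- choice of δ₁ and κ₁
    (δ₁ κ₁ : ℝ)
    (hδ₁ : 0 < δ₁)
    (hκ₁' : κ₁ ≤ κ₀)
    (hcontr : ∀ l ∈ Icc a₀ b₀, ∀ k ∈ Icc (-κ₀) κ₀, κ₁ ^ 2 * ‖F' l k‖ ≤ 1 - δ₁)
    -- λ_κ^∞ : the unique solution in [a₀,b₀] of λ = λ_κ − κ² Re F(λ,κ)
    (lamInf : ℝ → ℝ)
    (hfix : ∀ k : ℝ, k ≠ 0 → |k| ≤ κ₁ → lamInf k ∈ Icc a₀ b₀ ∧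
      lamInf k = lam k - k ^ 2 * (F (lamInf k) k).re ∧
      (∀ l' ∈ Icc a₀ b₀, l' = lam k - k ^ 2 * (F l' k).re → l' = lamInf k))
    :
    ∀ G G1 Ghat : ℝ → ℝ → ℂ,
      (∀ l k : ℝ, G l k = ((lam k : ℂ) - l - (k : ℂ) ^ 2 * F l k)⁻¹) →
      (∀ l k : ℝ, G1 l k = ((lam k : ℂ) - l - (k : ℂ) ^ 2 * F (lamInf k) k
          - (k : ℂ) ^ 2 * F' (lamInf k) k * ((l : ℂ) - (lamInf k : ℂ)))⁻¹) →
      (∀ l k : ℝ, Ghat l k = ((lamInf k : ℂ) - l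
          - Complex.I * (k : ℂ) ^ 2 * ((F (lamInf k) k).im : ℂ))⁻¹) →
      ∃ C > 0, ∀ l ∈ Icc a₀ b₀, ∀ k : ℝ, k ≠ 0 → |k| ≤ κ₁ →
        (∀ M : ℝ, (∀ l' ∈ Icc a₀ b₀, ∀ k' ∈ Icc (-κ₀) κ₀, ‖F' l' k'‖ ≤ M) →
          ‖G l k - G1 l k‖ ≤ C * k ^ 2 * ‖Ghat l k‖ * M) ∧
        ‖G l k - G1 l k‖ ≤ C * k ^ 2 * ‖Ghat l k‖ ^ 2 * |l - lamInf k| ^ (α + 1) := by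
  intro G G1 Ghat hG hG1 hGhat
  obtain ⟨L, hL⟩ := hH1b
  refine ⟨(|L| + 2) / δ₁ ^ 2, by positivity, fun l hl k hk0 hk => ?_⟩
  obtain ⟨hli, hlifix, -⟩ := hfix k hk0 hk
  have hkmem : k ∈ Icc (-κ₀) κ₀ := abs_le.mp (hk.trans hκ₁')
  have hsub : Icc a₀ b₀ ⊆ Icc a b := Icc_subset_Icc ha.le hb.le
  have hF : ∀ t ∈ Icc a₀ b₀, HasDerivWithinAt (fun x => F x k) (F' t k) (Icc a₀ b₀) t :=
    fun t ht => (hH1 k hkmem t (hsub ht)).mono hsub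
  have hk2 : k ^ 2 ≤ κ₁ ^ 2 := by simpa [sq_abs] using pow_le_pow_left₀ (abs_nonneg k) hk 2
  have hkF' : ∀ t ∈ Icc a₀ b₀, k ^ 2 * ‖F' t k‖ ≤ 1 - δ₁ := fun t ht =>
    (mul_le_mul_of_nonneg_right hk2 (norm_nonneg _)).trans (hcontr t ht k hkmem)
  have hholder := norm_inv_sub_inv_linearization_le_of_holder_deriv (convex_Icc a₀ b₀) hF hδ₁
    (sq_nonneg k) hkF' hli hlifix hl hα.1.le (hL k hkmem)
  push_cast at hholder
  rw [← hG, ← hG1, ← hGhat] at hholder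
  refine ⟨fun M hM => ?_, hholder.trans (by gcongr; linarith [le_abs_self L])⟩
  have hsup := norm_inv_sub_inv_linearization_le_of_norm_deriv_le (convex_Icc a₀ b₀) hF hδ₁
    (sq_nonneg k) hkF' hli hlifix hl (fun t ht => hM t ht k hkmem)
  push_cast at hsup
  rw [← hG, ← hG1, ← hGhat] at hsup
  refine hsup.trans (mul_le_mul_of_nonneg_right (by gcongr; linarith [abs_nonneg L]) ?_)
  exact (norm_nonneg _).trans (hM _ hli k hkmem)

/-- Lemma 2.7: pointwise bounds on G − G₁ in terms of Ĝ. -/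
theorem stmt_6
    (a a₀ b₀ b l₀ κ₀ α : ℝ)
    (ha : a < a₀) (hab : a₀ < b₀) (hb : b₀ < b)
    (hl₀ : l₀ ∈ Ioo a₀ b₀) (hκ₀ : 0 < κ₀) (hα : α ∈ Ioc (0:ℝ) 1)
    (lam : ℝ → ℝ) (F F' : ℝ → ℝ → ℂ)
    -- (H0)(a)
    (hH0a : Tendsto lam (𝓝 0) (𝓝 l₀))
    -- (H0)(b)
    (hH0b : ∃ M : ℝ, ∀ l ∈ Icc a b, ∀ k ∈ Icc (-κ₀) κ₀, ‖F l k‖ ≤ M)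
    (hH0c : ContinuousWithinAt (fun p : ℝ × ℝ => F p.1 p.2)
      (Icc a b ×ˢ Icc (-κ₀) κ₀) (l₀, 0))
    -- (H1): F(·,κ) is C¹ on [a,b] with derivative F'
    (hH1 : ∀ k ∈ Icc (-κ₀) κ₀, ∀ l ∈ Icc a b,
      HasDerivWithinAt (fun x => F x k) (F' l k) (Icc a b) l)
    (hH1cont : ∀ k ∈ Icc (-κ₀) κ₀, ContinuousOn (fun l => F' l k) (Icc a b))
    -- (H1)(a): F' bounded
    (hH1a : ∃ M' : ℝ, ∀ l ∈ Icc a b, ∀ k ∈ Icc (-κ₀) κ₀, ‖F' l k‖ ≤ M')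
    -- (H1)(b): F' is α-Hölder on [a₀,b₀] uniformly in κ
    (hH1b : ∃ L : ℝ, ∀ k ∈ Icc (-κ₀) κ₀, ∀ l₁ ∈ Icc a₀ b₀, ∀ l₂ ∈ Icc a₀ b₀,
      ‖F' l₁ k - F' l₂ k‖ ≤ L * |l₁ - l₂| ^ α)
    -- (H2): inf of Im F on [a₀,b₀] is positive
    (hH2 : ∀ k ∈ Icc (-κ₀) κ₀, ∃ c > 0, ∀ l ∈ Icc a₀ b₀, c ≤ (F l k).im)
    -- choice of δ₁ and κ₁
    (δ₁ κ₁ : ℝ)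
    (hδ₁ : 0 < δ₁) (hδ₁' : δ₁ < min (l₀ - a₀) (min (b₀ - l₀) 1))
    (hκ₁ : 0 < κ₁) (hκ₁' : κ₁ ≤ κ₀)
    (hmap : ∀ k : ℝ, |k| ≤ κ₁ → ∀ l ∈ Icc a₀ b₀,
      lam k - k ^ 2 * (F l k).re ∈ Icc (a₀ + δ₁) (b₀ - δ₁))
    (hcontr : ∀ l ∈ Icc a₀ b₀, ∀ k ∈ Icc (-κ₀) κ₀, κ₁ ^ 2 * ‖F' l k‖ ≤ 1 - δ₁)
    -- D(λ,κ) ≠ 0 on [a,b] for 0 < |κ| ≤ κ₁ (so that G is well defined)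
    (hDne : ∀ k : ℝ, k ≠ 0 → |k| ≤ κ₁ → ∀ l ∈ Icc a b,
      (lam k : ℂ) - (l : ℂ) - (k : ℂ) ^ 2 * F l k ≠ 0)
    -- λ_κ^∞ : the unique solution in [a₀,b₀] of λ = λ_κ − κ² Re F(λ,κ)
    (lamInf : ℝ → ℝ)
    (hfix : ∀ k : ℝ, k ≠ 0 → |k| ≤ κ₁ → lamInf k ∈ Icc a₀ b₀ ∧
      lamInf k = lam k - k ^ 2 * (F (lamInf k) k).re ∧
      (∀ l' ∈ Icc a₀ b₀, l' = lam k - k ^ 2 * (F l' k).re → l' = lamInf k))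
    :
    ∀ G G1 Ghat : ℝ → ℝ → ℂ,
      (∀ l k : ℝ, G l k = ((lam k : ℂ) - l - (k : ℂ) ^ 2 * F l k)⁻¹) →
      (∀ l k : ℝ, G1 l k = ((lam k : ℂ) - l - (k : ℂ) ^ 2 * F (lamInf k) k
          - (k : ℂ) ^ 2 * F' (lamInf k) k * ((l : ℂ) - (lamInf k : ℂ)))⁻¹) →
      (∀ l k : ℝ, Ghat l k = ((lamInf k : ℂ) - l
          - Complex.I * (k : ℂ) ^ 2 * ((F (lamInf k) k).im : ℂ))⁻¹) →
      ∃ C > 0, ∀ l ∈ Icc a₀ b₀, ∀ k : ℝ, k ≠ 0 → |k| ≤ κ₁ →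
        (∀ M : ℝ, (∀ l' ∈ Icc a₀ b₀, ∀ k' ∈ Icc (-κ₀) κ₀, ‖F' l' k'‖ ≤ M) →
          ‖G l k - G1 l k‖ ≤ C * k ^ 2 * ‖Ghat l k‖ * M) ∧
        ‖G l k - G1 l k‖ ≤ C * k ^ 2 * ‖Ghat l k‖ ^ 2 * |l - lamInf k| ^ (α + 1) :=
  stmt_6_general a a₀ b₀ b κ₀ α ha hb hα lam F F' hH1 hH1b δ₁ κ₁ hδ₁ hκ₁' hcontr lamInf hfix
end

section
/- There exist C > 0 and κ₂ ∈ (0,κ₁] such that for all t ∈ ℝ and 0 < |κ| ≤ κ₂: |I₂(t,κ)| ≤ ∫_{a₀}^{b₀} |G(λ,κ) − G₁(λ,κ)| dλ ≤ Cκ², where I₂(t,κ) := (1/π)∫_{a₀}^{b₀} e^{−iλt} Im(G(λ,κ) − G₁(λ,κ)) dλ. -/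
/-!
Write `c = λ_κ^∞`. The fixed-point equation for `c` makes `Re D(λ,κ)` and `Re D₁(λ,κ)` equal to
`c - λ` minus a term of size at most `(1 - δ₁)|λ - c|` (mean value theorem and
`κ₁² |F'| ≤ 1 - δ₁`), so `|D|, |D₁| ≥ δ₁ |λ - c|`. Hölder continuity of `F'` gives
`|D - D₁| ≤ L κ² |λ - c|^(1+α)`, hence `|G - G₁| = |D - D₁| / |D D₁| ≤ (L / δ₁²) κ² |λ - c|^(α-1)`,
whose integral over `[a₀, b₀]` is bounded uniformly in `c`. The bound on `I₂` is the pointwise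
estimate `|e^{-iλt} Im z| ≤ |z|`.
-/

open MeasureTheory Filter Set Topology

section AbsRpow

open intervalIntegral

variable {r : ℝ}

theorem intervalIntegrable_abs_rpow (hr : -1 < r) (a b : ℝ) :
    IntervalIntegrable (fun x => |x| ^ r) volume a b := by
  have hpos : ∀ s, 0 ≤ s → IntervalIntegrable (fun x => |x| ^ r) volume 0 s := fun s hs =>
    (intervalIntegrable_rpow' hr).congr <| fun x hx => by
      rw [uIoc_of_le hs] at hx
      simp only [abs_of_pos hx.1]
  have hall : ∀ s, IntervalIntegrable (fun x => |x| ^ r) volume 0 s := fun s => by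
    rcases le_total 0 s with hs | hs
    · exact hpos s hs
    · rw [IntervalIntegrable.iff_comp_neg]
      simpa using hpos (-s) (by linarith)
  exact (hall a).symm.trans (hall b)

theorem integral_abs_rpow_of_nonneg (hr : -1 < r) {s : ℝ} (hs : 0 ≤ s) :
    ∫ x in 0..s, |x| ^ r = s ^ (r + 1) / (r + 1) := by
  rw [integral_congr fun x hx => by rw [abs_of_nonneg (uIcc_of_le hs ▸ hx).1],
    integral_rpow (Or.inl hr), Real.zero_rpow (by linarith), sub_zero]

theorem integral_abs_rpow_of_nonpos (hr : -1 < r) {s : ℝ} (hs : s ≤ 0) :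
    ∫ x in s..0, |x| ^ r = (-s) ^ (r + 1) / (r + 1) := by
  rw [← integral_abs_rpow_of_nonneg hr (neg_nonneg.2 hs), ← neg_zero, ← integral_comp_neg]
  simp

theorem integral_abs_sub_rpow_le {p q c α : ℝ} (hα : 0 < α) (hc : c ∈ Icc p q) :
    ∫ x in p..q, |x - c| ^ (α - 1) ≤ 2 * (q - p) ^ α / α := by
  have hr : -1 < α - 1 := by linarith
  rw [integral_comp_sub_right (fun x => |x| ^ (α - 1)),
    ← integral_add_adjacent_intervals (intervalIntegrable_abs_rpow hr _ _)
      (intervalIntegrable_abs_rpow hr _ _),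
    integral_abs_rpow_of_nonpos hr (by linarith [hc.1]),
    integral_abs_rpow_of_nonneg hr (by linarith [hc.2]), sub_add_cancel, neg_sub, two_mul,
    add_div]
  gcongr <;> linarith [hc.1, hc.2]

end AbsRpow

theorem norm_sub_sub_smul_le_of_holder {E : Type*} [NormedAddCommGroup E] [NormedSpace ℝ E]
    {f f' : ℝ → E} {s : Set ℝ} {H α c l : ℝ} (hs : s.OrdConnected)
    (hf : ∀ x ∈ s, HasDerivWithinAt f (f' x) s x)
    (hH : ∀ x ∈ s, ∀ y ∈ s, ‖f' x - f' y‖ ≤ H * |x - y| ^ α) (hH₀ : 0 ≤ H) (hα : 0 ≤ α)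
    (hc : c ∈ s) (hl : l ∈ s) :
    ‖f l - f c - (l - c) • f' c‖ ≤ H * |l - c| ^ α * |l - c| := by
  have hsub : uIcc c l ⊆ s := hs.uIcc_subset hc hl
  have hderiv : ∀ x ∈ uIcc c l,
      HasDerivWithinAt (fun x => f x - x • f' c) (f' x - f' c) (uIcc c l) x := fun x hx =>
    ((hf x (hsub hx)).mono hsub).sub (by simpa using (hasDerivWithinAt_id x _).smul_const (f' c))
  have hbound : ∀ x ∈ uIcc c l, ‖f' x - f' c‖ ≤ H * |l - c| ^ α := fun x hx =>
    (hH x (hsub hx) c hc).trans <| mul_le_mul_of_nonneg_left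
      (Real.rpow_le_rpow (abs_nonneg _) (abs_sub_left_of_mem_uIcc hx) hα) hH₀
  have := (convex_uIcc c l).norm_image_sub_le_of_norm_hasDerivWithin_le hderiv hbound
    left_mem_uIcc right_mem_uIcc
  rw [Real.norm_eq_abs] at this
  convert this using 2
  rw [sub_smul]
  abel

theorem mul_abs_le_norm_of_re_eq {z w : ℂ} {x δ : ℝ} (hre : z.re = x - w.re)
    (hw : ‖w‖ ≤ (1 - δ) * |x|) : δ * |x| ≤ ‖z‖ :=
  calc δ * |x| ≤ |x| - |w.re| := by linarith [Complex.abs_re_le_norm w]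
    _ ≤ |x - w.re| := abs_sub_abs_le_abs_sub _ _
    _ = |z.re| := by rw [hre]
    _ ≤ ‖z‖ := Complex.abs_re_le_norm z

-- `denom μ f` and `linDenom μ c f f'` are `D(·,κ)` and `D₁(·,κ)` for `μ = λ_κ`, `c = λ_κ^∞`,
-- `f = κ² F(·,κ)` and `f' = κ² F'(·,κ)`.
def denom (μ : ℝ) (f : ℝ → ℂ) (l : ℝ) : ℂ := μ - l - f l

def linDenom (μ c : ℝ) (f f' : ℝ → ℂ) (l : ℝ) : ℂ := μ - l - f c - f' c * (l - c)

section Denominators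

variable {f f' : ℝ → ℂ} {p q μ c δ H α l : ℝ}

theorem linDenom_self : linDenom μ c f f' c = denom μ f c := by
  simp [linDenom, denom]

theorem mul_abs_sub_le_norm_denom (hf : ∀ x ∈ Icc p q, HasDerivWithinAt f (f' x) (Icc p q) x)
    (hf' : ∀ x ∈ Icc p q, ‖f' x‖ ≤ 1 - δ) (hc : c ∈ Icc p q) (hfix : c = μ - (f c).re)
    (hl : l ∈ Icc p q) : δ * |l - c| ≤ ‖denom μ f l‖ := by
  have hlip := (convex_Icc p q).norm_image_sub_le_of_norm_hasDerivWithin_le hf hf' hc hl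
  rw [Real.norm_eq_abs, abs_sub_comm] at hlip
  rw [abs_sub_comm]
  refine mul_abs_le_norm_of_re_eq (w := f l - f c) ?_ hlip
  simp only [denom, Complex.sub_re, Complex.ofReal_re]
  linarith

theorem mul_abs_sub_le_norm_linDenom (hf' : ‖f' c‖ ≤ 1 - δ) (hfix : c = μ - (f c).re) :
    δ * |l - c| ≤ ‖linDenom μ c f f' l‖ := by
  rw [abs_sub_comm]
  refine mul_abs_le_norm_of_re_eq (w := f' c * (l - c)) ?_ ?_
  · simp only [linDenom, Complex.sub_re, Complex.ofReal_re]
    linarith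
  · rw [norm_mul, ← Complex.ofReal_sub, Complex.norm_real, Real.norm_eq_abs, abs_sub_comm]
    gcongr

theorem norm_denom_sub_linDenom_le (hf : ∀ x ∈ Icc p q, HasDerivWithinAt f (f' x) (Icc p q) x)
    (hH : ∀ x ∈ Icc p q, ∀ y ∈ Icc p q, ‖f' x - f' y‖ ≤ H * |x - y| ^ α) (hH₀ : 0 ≤ H)
    (hα : 0 ≤ α) (hc : c ∈ Icc p q) (hl : l ∈ Icc p q) :
    ‖denom μ f l - linDenom μ c f f' l‖ ≤ H * |l - c| ^ α * |l - c| := by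
  have := norm_sub_sub_smul_le_of_holder ordConnected_Icc hf hH hH₀ hα hc hl
  rw [Complex.real_smul] at this
  have hneg : -(denom μ f l - linDenom μ c f f' l) = f l - f c - ↑(l - c) * f' c := by
    simp only [denom, linDenom]
    push_cast
    ring
  rwa [← norm_neg, hneg]

theorem norm_inv_denom_sub_inv_linDenom_le
    (hf : ∀ x ∈ Icc p q, HasDerivWithinAt f (f' x) (Icc p q) x)
    (hf' : ∀ x ∈ Icc p q, ‖f' x‖ ≤ 1 - δ)
    (hH : ∀ x ∈ Icc p q, ∀ y ∈ Icc p q, ‖f' x - f' y‖ ≤ H * |x - y| ^ α) (hH₀ : 0 ≤ H)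
    (hα : 0 ≤ α) (hδ : 0 < δ) (hc : c ∈ Icc p q) (hfix : c = μ - (f c).re)
    (hl : l ∈ Icc p q) :
    ‖(denom μ f l)⁻¹ - (linDenom μ c f f' l)⁻¹‖ ≤ H / δ ^ 2 * |l - c| ^ (α - 1) := by
  rcases eq_or_ne l c with rfl | hlc
  · rw [linDenom_self, sub_self, norm_zero]
    positivity
  have hx : 0 < |l - c| := abs_pos.2 (sub_ne_zero.2 hlc)
  have hD := mul_abs_sub_le_norm_denom hf hf' hc hfix hl
  have hD₁ := mul_abs_sub_le_norm_linDenom (hf' c hc) hfix (l := l)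
  have hdiff := norm_denom_sub_linDenom_le (μ := μ) hf hH hH₀ hα hc hl
  rw [inv_sub_inv (norm_pos_iff.1 (hD.trans_lt' (by positivity)))
    (norm_pos_iff.1 (hD₁.trans_lt' (by positivity))), norm_div, norm_mul, norm_sub_rev,
    Real.rpow_sub_one hx.ne']
  calc _ ≤ H * |l - c| ^ α * |l - c| / (δ * |l - c| * (δ * |l - c|)) := by
        gcongr
    _ = _ := by field_simp

theorem continuousOn_inv_denom_sub_inv_linDenom
    (hf : ∀ x ∈ Icc p q, HasDerivWithinAt f (f' x) (Icc p q) x)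
    (hf' : ∀ x ∈ Icc p q, ‖f' x‖ ≤ 1 - δ) (hδ : 0 < δ) (hc : c ∈ Icc p q)
    (hfix : c = μ - (f c).re) (hc₀ : denom μ f c ≠ 0) :
    ContinuousOn (fun l => (denom μ f l)⁻¹ - (linDenom μ c f f' l)⁻¹) (Icc p q) := by
  have hne : ∀ l ∈ Icc p q, denom μ f l ≠ 0 ∧ linDenom μ c f f' l ≠ 0 := by
    intro l hl
    rcases eq_or_ne l c with rfl | hlc
    · exact ⟨hc₀, linDenom_self (f' := f') ▸ hc₀⟩
    have hx : 0 < δ * |l - c| := by positivity [sub_ne_zero.2 hlc]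
    exact ⟨norm_pos_iff.1 (hx.trans_le (mul_abs_sub_le_norm_denom hf hf' hc hfix hl)),
      norm_pos_iff.1 (hx.trans_le (mul_abs_sub_le_norm_linDenom (hf' c hc) hfix))⟩
  have hfc : ContinuousOn f (Icc p q) := fun x hx => (hf x hx).continuousWithinAt
  refine ContinuousOn.sub ?_ ?_
  · exact ContinuousOn.inv₀ (by unfold denom; fun_prop) fun l hl => (hne l hl).1
  · exact ContinuousOn.inv₀ (by unfold linDenom; fun_prop) fun l hl => (hne l hl).2

theorem integral_norm_inv_denom_sub_inv_linDenom_le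
    (hf : ∀ x ∈ Icc p q, HasDerivWithinAt f (f' x) (Icc p q) x)
    (hf' : ∀ x ∈ Icc p q, ‖f' x‖ ≤ 1 - δ)
    (hH : ∀ x ∈ Icc p q, ∀ y ∈ Icc p q, ‖f' x - f' y‖ ≤ H * |x - y| ^ α) (hH₀ : 0 ≤ H)
    (hα : 0 < α) (hδ : 0 < δ) (hc : c ∈ Icc p q) (hfix : c = μ - (f c).re)
    (hc₀ : denom μ f c ≠ 0) :
    ∫ l in p..q, ‖(denom μ f l)⁻¹ - (linDenom μ c f f' l)⁻¹‖
      ≤ H / δ ^ 2 * (2 * (q - p) ^ α / α) := by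
  have hpq : p ≤ q := hc.1.trans hc.2
  have hcont := continuousOn_inv_denom_sub_inv_linDenom hf hf' hδ hc hfix hc₀
  calc _ ≤ ∫ l in p..q, H / δ ^ 2 * |l - c| ^ (α - 1) := by
        refine intervalIntegral.integral_mono_on hpq ?_ ?_ fun l hl =>
          norm_inv_denom_sub_inv_linDenom_le hf hf' hH hH₀ hα.le hδ hc hfix hl
        · exact (hcont.norm.mono (uIcc_of_le hpq).subset).intervalIntegrable
        · refine IntervalIntegrable.const_mul ?_ _
          simpa using (intervalIntegrable_abs_rpow (r := α - 1) (by linarith) (p - c)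
            (q - c)).comp_sub_right c
    _ ≤ _ := by
        rw [intervalIntegral.integral_const_mul]
        gcongr
        exact integral_abs_sub_rpow_le hα hc

end Denominators

theorem norm_one_div_pi_mul_integral_exp_mul_im_le {g : ℝ → ℂ} {p q : ℝ} (hpq : p ≤ q)
    (hg : IntervalIntegrable (fun l => ‖g l‖) volume p q) (t : ℝ) :
    ‖(1 / (Real.pi : ℂ)) * ∫ l in p..q, Complex.exp (-Complex.I * l * t) * (((g l).im : ℝ) : ℂ)‖
      ≤ ∫ l in p..q, ‖g l‖ := by
  have hpi : ‖(1 / (Real.pi : ℂ))‖ ≤ 1 := by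
    rw [one_div, norm_inv, Complex.norm_real, Real.norm_of_nonneg Real.pi_pos.le]
    exact inv_le_one_of_one_le₀ (by linarith [Real.pi_gt_three])
  have hint : ‖∫ l in p..q, Complex.exp (-Complex.I * l * t) * (((g l).im : ℝ) : ℂ)‖
      ≤ ∫ l in p..q, ‖g l‖ := by
    refine intervalIntegral.norm_integral_le_of_norm_le hpq (ae_of_all _ fun l _ => ?_) hg
    rw [norm_mul, Complex.norm_exp, Complex.norm_real, Real.norm_eq_abs]
    simpa using Complex.abs_im_le_norm (g l)
  rw [norm_mul]
  exact (mul_le_of_le_one_left (norm_nonneg _) hpi).trans hint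

theorem stmt_7_general
    (a a₀ b₀ b κ₀ α : ℝ)
    (ha : a < a₀) (hab : a₀ < b₀) (hb : b₀ < b)
    (hα : α ∈ Ioc (0:ℝ) 1)
    (lam : ℝ → ℝ) (F F' : ℝ → ℝ → ℂ)
    -- (H1): F(·,κ) is C¹ on [a,b] with derivative F'
    (hH1 : ∀ k ∈ Icc (-κ₀) κ₀, ∀ l ∈ Icc a b,
      HasDerivWithinAt (fun x => F x k) (F' l k) (Icc a b) l)
    -- (H1)(b): F' is α-Hölder on [a₀,b₀] uniformly in κ
    (hH1b : ∃ L : ℝ, ∀ k ∈ Icc (-κ₀) κ₀, ∀ l₁ ∈ Icc a₀ b₀, ∀ l₂ ∈ Icc a₀ b₀,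
      ‖F' l₁ k - F' l₂ k‖ ≤ L * |l₁ - l₂| ^ α)
    -- choice of δ₁ and κ₁
    (δ₁ κ₁ : ℝ)
    (hδ₁ : 0 < δ₁)
    (hκ₁ : 0 < κ₁) (hκ₁' : κ₁ ≤ κ₀)
    (hcontr : ∀ l ∈ Icc a₀ b₀, ∀ k ∈ Icc (-κ₀) κ₀, κ₁ ^ 2 * ‖F' l k‖ ≤ 1 - δ₁)
    -- D(λ,κ) ≠ 0 on [a,b] for 0 < |κ| ≤ κ₁ (so that G is well defined)
    (hDne : ∀ k : ℝ, k ≠ 0 → |k| ≤ κ₁ → ∀ l ∈ Icc a b,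
      (lam k : ℂ) - (l : ℂ) - (k : ℂ) ^ 2 * F l k ≠ 0)
    -- λ_κ^∞ : the unique solution in [a₀,b₀] of λ = λ_κ − κ² Re F(λ,κ)
    (lamInf : ℝ → ℝ)
    (hfix : ∀ k : ℝ, k ≠ 0 → |k| ≤ κ₁ → lamInf k ∈ Icc a₀ b₀ ∧
      lamInf k = lam k - k ^ 2 * (F (lamInf k) k).re ∧
      (∀ l' ∈ Icc a₀ b₀, l' = lam k - k ^ 2 * (F l' k).re → l' = lamInf k))
    :
    ∀ G G1 : ℝ → ℝ → ℂ,
      (∀ l k : ℝ, G l k = ((lam k : ℂ) - l - (k : ℂ) ^ 2 * F l k)⁻¹) →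
      (∀ l k : ℝ, G1 l k = ((lam k : ℂ) - l - (k : ℂ) ^ 2 * F (lamInf k) k
          - (k : ℂ) ^ 2 * F' (lamInf k) k * ((l : ℂ) - (lamInf k : ℂ)))⁻¹) →
      ∃ C > 0, ∃ κ₂ : ℝ, 0 < κ₂ ∧ κ₂ ≤ κ₁ ∧ ∀ t : ℝ, ∀ k : ℝ, k ≠ 0 → |k| ≤ κ₂ →
        ‖(1 / (Real.pi : ℂ)) * ∫ l in a₀..b₀,
            Complex.exp (-Complex.I * l * t) * (((G l k - G1 l k).im : ℝ) : ℂ)‖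
          ≤ (∫ l in a₀..b₀, ‖G l k - G1 l k‖) ∧
        (∫ l in a₀..b₀, ‖G l k - G1 l k‖) ≤ C * k ^ 2 := by
  intro G G1 hG hG1
  obtain ⟨L, hL⟩ := hH1b
  refine ⟨(|L| + 1) / δ₁ ^ 2 * (2 * (b₀ - a₀) ^ α / α),
    by have := sub_pos.2 hab; have := hα.1; positivity,
    κ₁, hκ₁, le_rfl, fun t k hk hkκ₁ => ?_⟩
  have hkκ₀ : k ∈ Icc (-κ₀) κ₀ := abs_le.1 (hkκ₁.trans hκ₁')
  have hsub : Icc a₀ b₀ ⊆ Icc a b := Icc_subset_Icc ha.le hb.le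
  have hk2 : ‖(k : ℂ) ^ 2‖ = k ^ 2 := by simp
  obtain ⟨hc, hcfix, -⟩ := hfix k hk hkκ₁
  set c := lamInf k
  set f : ℝ → ℂ := fun l => (k : ℂ) ^ 2 * F l k
  set f' : ℝ → ℂ := fun l => (k : ℂ) ^ 2 * F' l k
  have hf : ∀ x ∈ Icc a₀ b₀, HasDerivWithinAt f (f' x) (Icc a₀ b₀) x := fun x hx =>
    ((hH1 k hkκ₀ x (hsub hx)).mono hsub).const_mul _
  have hf' : ∀ x ∈ Icc a₀ b₀, ‖f' x‖ ≤ 1 - δ₁ := fun x hx => by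
    rw [norm_mul, hk2]
    exact le_trans (mul_le_mul_of_nonneg_right (sq_le_sq' (abs_le.1 hkκ₁).1 (abs_le.1 hkκ₁).2)
      (norm_nonneg _)) (hcontr x hx k hkκ₀)
  have hH : ∀ x ∈ Icc a₀ b₀, ∀ y ∈ Icc a₀ b₀,
      ‖f' x - f' y‖ ≤ k ^ 2 * (|L| + 1) * |x - y| ^ α := fun x hx y hy => by
    rw [← mul_sub, norm_mul, hk2, mul_assoc]
    gcongr
    exact (hL k hkκ₀ x hx y hy).trans (by gcongr; linarith [le_abs_self L])
  have hcfix' : c = lam k - (f c).re := by simpa [f, ← Complex.ofReal_pow] using hcfix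
  have hc₀ : denom (lam k) f c ≠ 0 := hDne k hk hkκ₁ c (hsub hc)
  have hGG1 : ∀ l, G l k - G1 l k = (denom (lam k) f l)⁻¹ - (linDenom (lam k) c f f' l)⁻¹ :=
    fun l => by rw [hG, hG1]; rfl
  have hcont := continuousOn_inv_denom_sub_inv_linDenom hf hf' hδ₁ hc hcfix' hc₀
  simp only [hGG1]
  refine ⟨norm_one_div_pi_mul_integral_exp_mul_im_le hab.le
    (hcont.norm.mono (uIcc_of_le hab.le).subset).intervalIntegrable t, ?_⟩
  refine (integral_norm_inv_denom_sub_inv_linDenom_le hf hf' hH (by positivity) hα.1 hδ₁ hc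
    hcfix' hc₀).trans_eq ?_
  ring

/-- Corollary 2.8: the term I₂ is of order κ². -/
theorem stmt_7
    (a a₀ b₀ b l₀ κ₀ α : ℝ)
    (ha : a < a₀) (hab : a₀ < b₀) (hb : b₀ < b)
    (hl₀ : l₀ ∈ Ioo a₀ b₀) (hκ₀ : 0 < κ₀) (hα : α ∈ Ioc (0:ℝ) 1)
    (lam : ℝ → ℝ) (F F' : ℝ → ℝ → ℂ)
    -- (H0)(a)
    (hH0a : Tendsto lam (𝓝 0) (𝓝 l₀))
    -- (H0)(b)
    (hH0b : ∃ M : ℝ, ∀ l ∈ Icc a b, ∀ k ∈ Icc (-κ₀) κ₀, ‖F l k‖ ≤ M)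
    (hH0c : ContinuousWithinAt (fun p : ℝ × ℝ => F p.1 p.2)
      (Icc a b ×ˢ Icc (-κ₀) κ₀) (l₀, 0))
    -- (H1): F(·,κ) is C¹ on [a,b] with derivative F'
    (hH1 : ∀ k ∈ Icc (-κ₀) κ₀, ∀ l ∈ Icc a b,
      HasDerivWithinAt (fun x => F x k) (F' l k) (Icc a b) l)
    (hH1cont : ∀ k ∈ Icc (-κ₀) κ₀, ContinuousOn (fun l => F' l k) (Icc a b))
    -- (H1)(a): F' bounded
    (hH1a : ∃ M' : ℝ, ∀ l ∈ Icc a b, ∀ k ∈ Icc (-κ₀) κ₀, ‖F' l k‖ ≤ M')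
    -- (H1)(b): F' is α-Hölder on [a₀,b₀] uniformly in κ
    (hH1b : ∃ L : ℝ, ∀ k ∈ Icc (-κ₀) κ₀, ∀ l₁ ∈ Icc a₀ b₀, ∀ l₂ ∈ Icc a₀ b₀,
      ‖F' l₁ k - F' l₂ k‖ ≤ L * |l₁ - l₂| ^ α)
    -- (H2): inf of Im F on [a₀,b₀] is positive
    (hH2 : ∀ k ∈ Icc (-κ₀) κ₀, ∃ c > 0, ∀ l ∈ Icc a₀ b₀, c ≤ (F l k).im)
    -- choice of δ₁ and κ₁
    (δ₁ κ₁ : ℝ)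
    (hδ₁ : 0 < δ₁) (hδ₁' : δ₁ < min (l₀ - a₀) (min (b₀ - l₀) 1))
    (hκ₁ : 0 < κ₁) (hκ₁' : κ₁ ≤ κ₀)
    (hmap : ∀ k : ℝ, |k| ≤ κ₁ → ∀ l ∈ Icc a₀ b₀,
      lam k - k ^ 2 * (F l k).re ∈ Icc (a₀ + δ₁) (b₀ - δ₁))
    (hcontr : ∀ l ∈ Icc a₀ b₀, ∀ k ∈ Icc (-κ₀) κ₀, κ₁ ^ 2 * ‖F' l k‖ ≤ 1 - δ₁)
    -- D(λ,κ) ≠ 0 on [a,b] for 0 < |κ| ≤ κ₁ (so that G is well defined)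
    (hDne : ∀ k : ℝ, k ≠ 0 → |k| ≤ κ₁ → ∀ l ∈ Icc a b,
      (lam k : ℂ) - (l : ℂ) - (k : ℂ) ^ 2 * F l k ≠ 0)
    -- λ_κ^∞ : the unique solution in [a₀,b₀] of λ = λ_κ − κ² Re F(λ,κ)
    (lamInf : ℝ → ℝ)
    (hfix : ∀ k : ℝ, k ≠ 0 → |k| ≤ κ₁ → lamInf k ∈ Icc a₀ b₀ ∧
      lamInf k = lam k - k ^ 2 * (F (lamInf k) k).re ∧
      (∀ l' ∈ Icc a₀ b₀, l' = lam k - k ^ 2 * (F l' k).re → l' = lamInf k))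
    :
    ∀ G G1 : ℝ → ℝ → ℂ,
      (∀ l k : ℝ, G l k = ((lam k : ℂ) - l - (k : ℂ) ^ 2 * F l k)⁻¹) →
      (∀ l k : ℝ, G1 l k = ((lam k : ℂ) - l - (k : ℂ) ^ 2 * F (lamInf k) k
          - (k : ℂ) ^ 2 * F' (lamInf k) k * ((l : ℂ) - (lamInf k : ℂ)))⁻¹) →
      ∃ C > 0, ∃ κ₂ : ℝ, 0 < κ₂ ∧ κ₂ ≤ κ₁ ∧ ∀ t : ℝ, ∀ k : ℝ, k ≠ 0 → |k| ≤ κ₂ →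
        ‖(1 / (Real.pi : ℂ)) * ∫ l in a₀..b₀,
            Complex.exp (-Complex.I * l * t) * (((G l k - G1 l k).im : ℝ) : ℂ)‖
          ≤ (∫ l in a₀..b₀, ‖G l k - G1 l k‖) ∧
        (∫ l in a₀..b₀, ‖G l k - G1 l k‖) ≤ C * k ^ 2 :=
  stmt_7_general a a₀ b₀ b κ₀ α ha hab hb hα lam F F' hH1 hH1b δ₁ κ₁ hδ₁ hκ₁ hκ₁' hcontr hDne lamInf
    hfix
end

section
/- (Feshbach–Livsic formula) Let H be a self-adjoint operator on a Hilbert space ℋ and P an orthogonal projection with finite-dimensional range contained in Dom(H); set P^⊥ = I − P and H^⊥ := P^⊥HP^⊥. Then for every z ∈ ℂ with Im z ≠ 0, the operator M := P(H−z)P − PHP^⊥(H^⊥ − z)⁻¹P^⊥HP is invertible as an operator from Ran P to Ran P, and P(H−z)⁻¹P = P·M⁻¹·P. -/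
/-!
With `Q = 1 - P` and `A = H - z`, the element `A` is invertible because the spectrum of a
self-adjoint operator is real. Splitting `A A⁻¹ P = P` along `1 = P + Q`, the `Q`-row gives
`QAQ · QA⁻¹P = -QAP · PA⁻¹P`, hence `QA⁻¹P = -SAP · PA⁻¹P`; substituting this into the `P`-row
gives `(PAP - PASAP) · PA⁻¹P = P`. The identity on the other side is the same computation in the
opposite ring, and `PASAP = PHSHP` because `PS = SP = 0`.
-/

theorem IsSelfAdjoint.isUnit_sub_smul_one {A : Type*} [CStarAlgebra A] {a : A}
    (ha : IsSelfAdjoint a) {z : ℂ} (hz : z.im ≠ 0) : IsUnit (a - z • 1) := by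
  have hres : IsUnit (algebraMap ℂ A z - a) :=
    spectrum.notMem_iff.mp fun hmem => hz (ha.im_eq_zero_of_mem_spectrum hmem)
  simpa [Algebra.algebraMap_eq_smul_one] using hres.neg

section Feshbach

variable {R : Type*} [Ring R]

/-- The Schur complement of `QAQ` in `A`, where `Q = 1 - P` and `S` stands for `(QAQ)⁻¹` on
`Ran Q`. -/
def feshbachMap (P A S : R) : R := P * A * P - P * A * S * A * P

theorem feshbachMap_mul_corner_inverse {P A S B : R} (hP : IsIdempotentElem P)
    (hSQ : S * (1 - P) = S) (hSQAQ : S * ((1 - P) * A * (1 - P)) = 1 - P) (hAB : A * B = 1) :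
    feshbachMap P A S * (P * B * P) = P := by
  have hcol : (1 - P) * A * ((1 - P) * (B * P)) = -((1 - P) * A * (P * (B * P))) := by
    refine eq_neg_of_add_eq_zero_right ?_
    calc _ = (1 - P) * (A * B) * P := by noncomm_ring
      _ = 0 := by rw [hAB, mul_one, hP.one_sub_mul_self]
  have hlow : S * A * (P * (B * P)) = -((1 - P) * (B * P)) := by
    calc S * A * (P * (B * P)) = S * (1 - P) * A * (P * (B * P)) := by rw [hSQ]
      _ = -(S * ((1 - P) * A * ((1 - P) * (B * P)))) := by rw [hcol]; noncomm_ring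
      _ = -((S * ((1 - P) * A * (1 - P))) * (B * P)) := by simp only [mul_assoc]
      _ = _ := by rw [hSQAQ]
  calc feshbachMap P A S * (P * B * P)
      = P * A * (P * P * (B * P)) - P * A * (S * A * (P * P * (B * P))) := by
        unfold feshbachMap; noncomm_ring
    _ = P * (A * B) * P := by rw [hP.eq, hlow]; noncomm_ring
    _ = P := by rw [hAB, mul_one, hP.eq]

theorem corner_inverse_mul_feshbachMap {P A S B : R} (hP : IsIdempotentElem P)
    (hQS : (1 - P) * S = S) (hQAQS : (1 - P) * A * (1 - P) * S = 1 - P) (hBA : B * A = 1) :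
    (P * B * P) * feshbachMap P A S = P := by
  open MulOpposite in
  have := feshbachMap_mul_corner_inverse (P := op P) (A := op A) (S := op S) (B := op B)
    (by simpa [IsIdempotentElem] using congrArg op hP.eq)
    (by simpa using congrArg op hQS)
    (by simpa [mul_assoc] using congrArg op hQAQS)
    (by simpa using congrArg op hBA)
  simpa [feshbachMap, mul_assoc] using congrArg unop this

theorem feshbachMap_sub_smul_one {K : Type*} [CommSemiring K] [Algebra K R] {P S : R}
    (hPS : P * S = 0) (hSP : S * P = 0) (H : R) (c : K) :
    feshbachMap P (H - c • 1) S = P * (H - c • 1) * P - P * H * S * H * P := by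
  have hleft : P * (H - c • 1) * S = P * H * S := by
    rw [mul_sub, sub_mul, mul_smul_comm, smul_mul_assoc, mul_one, hPS, smul_zero, sub_zero]
  have hright : S * ((H - c • 1) * P) = S * (H * P) := by
    rw [sub_mul, mul_sub, smul_mul_assoc, mul_smul_comm, one_mul, hSP, smul_zero, sub_zero]
  rw [feshbachMap, hleft, mul_assoc (P * H), mul_assoc (P * H), mul_assoc S, hright]
  simp only [mul_assoc]

theorem IsIdempotentElem.corner_sub_smul_one_mul_self {K : Type*} [CommSemiring K] [Algebra K R]
    {Q : R} (hQ : IsIdempotentElem Q) (H : R) (c : K) :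
    (Q * H * Q - c • 1) * Q = Q * (H - c • 1) * Q := by
  simp only [mul_sub, sub_mul, mul_smul_comm, smul_mul_assoc, mul_one, one_mul, mul_assoc, hQ.eq]

theorem IsIdempotentElem.self_mul_corner_sub_smul_one {K : Type*} [CommSemiring K] [Algebra K R]
    {Q : R} (hQ : IsIdempotentElem Q) (H : R) (c : K) :
    Q * (Q * H * Q - c • 1) = Q * (H - c • 1) * Q := by
  simp only [mul_sub, sub_mul, mul_smul_comm, smul_mul_assoc, mul_one, mul_assoc, hQ.eq,
    hQ.mul_self_mul]

end Feshbach

/-- `S` encodes `(H^⊥ - z)⁻¹` on `Ran P^⊥`, extended by zero on `Ran P`; likewise `W` encodes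
`M⁻¹` on `Ran P`, extended by zero. -/
theorem stmt_11_general
    {E : Type*} [NormedAddCommGroup E] [InnerProductSpace ℂ E] [CompleteSpace E]
    (H P : E →L[ℂ] E) (hH : IsSelfAdjoint H)
    (hP2 : P * P = P)
    (z : ℂ) (hz : z.im ≠ 0)
    (S : E →L[ℂ] E)
    (hS1 : S * (1 - P) = S) (hS2 : (1 - P) * S = S)
    (hS3 : ((1 - P) * H * (1 - P) - z • 1) * S = 1 - P)
    (hS4 : S * ((1 - P) * H * (1 - P) - z • 1) * (1 - P) = 1 - P) :
    ∃ W : E →L[ℂ] E, W = P * W * P ∧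
      (P * (H - z • 1) * P - P * H * S * H * P) * W = P ∧
      W * (P * (H - z • 1) * P - P * H * S * H * P) = P ∧
      P * Ring.inverse (H - z • 1) * P = W := by
  have hP : IsIdempotentElem P := hP2
  have hA := hH.isUnit_sub_smul_one hz
  have hPS : P * S = 0 := by rw [← hS2, ← mul_assoc, hP.mul_one_sub_self, zero_mul]
  have hSP : S * P = 0 := by rw [← hS1, mul_assoc, hP.one_sub_mul_self, mul_zero]
  have hQAQS : (1 - P) * (H - z • 1) * (1 - P) * S = 1 - P := by
    rw [← hP.one_sub.self_mul_corner_sub_smul_one, mul_assoc, hS3, hP.one_sub.eq]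
  have hSQAQ : S * ((1 - P) * (H - z • 1) * (1 - P)) = 1 - P := by
    rw [← hP.one_sub.corner_sub_smul_one_mul_self, ← mul_assoc, hS4]
  rw [← feshbachMap_sub_smul_one hPS hSP]
  refine ⟨P * Ring.inverse (H - z • 1) * P, ?_,
    feshbachMap_mul_corner_inverse hP hS1 hSQAQ (Ring.mul_inverse_cancel _ hA),
    corner_inverse_mul_feshbachMap hP hS2 hQAQS (Ring.inverse_mul_cancel _ hA), rfl⟩
  simp only [mul_assoc, hP.eq, hP.mul_self_mul]

/-- Lemma 3.6 (Feshbach–Livsic formula). P is an orthogonal projection with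
finite-dimensional range, H is self-adjoint, Im z ≠ 0, and S is the resolvent
at z of H^⊥ = P^⊥HP^⊥ (restricted to Ran P^⊥), extended by 0 to all of E
(characterized by the four hypotheses hS1–hS4). Then
M := P(H−z)P − PHP^⊥(H^⊥−z)⁻¹P^⊥HP is invertible as a map Ran P → Ran P
(its inverse, extended by zero, is W), and P(H−z)⁻¹P = P M⁻¹ P. -/
theorem stmt_11
    {E : Type*} [NormedAddCommGroup E] [InnerProductSpace ℂ E] [CompleteSpace E]
    (H P : E →L[ℂ] E) (hH : IsSelfAdjoint H)
    (hP : IsSelfAdjoint P) (hP2 : P * P = P)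
    (hfin : FiniteDimensional ℂ (LinearMap.range (P : E →ₗ[ℂ] E)))
    (z : ℂ) (hz : z.im ≠ 0)
    (S : E →L[ℂ] E)
    (hS1 : S * (1 - P) = S) (hS2 : (1 - P) * S = S)
    (hS3 : ((1 - P) * H * (1 - P) - z • 1) * S = 1 - P)
    (hS4 : S * ((1 - P) * H * (1 - P) - z • 1) * (1 - P) = 1 - P) :
    ∃ W : E →L[ℂ] E, W = P * W * P ∧
      (P * (H - z • 1) * P - P * H * S * H * P) * W = P ∧
      W * (P * (H - z • 1) * P - P * H * S * H * P) = P ∧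
      P * Ring.inverse (H - z • 1) * P = W :=
  stmt_11_general H P hH hP2 z hz S hS1 hS2 hS3 hS4
end
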